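/- Let Z ~ N(m, σ²) with σ > 0, z_min ∈ ℝ, I = max(z_min − Z, 0), and EI = E[I]. Then Var(I) = EI·(z_min − m − EI) + σ²·Φ((z_min − m)/σ). -/

import Mathlib

open MeasureTheory ProbabilityTheory Real

noncomputable def stdNormalPdf (v : ℝ) : ℝ :=
  (Real.sqrt (2 * Real.pi))⁻¹ * Real.exp (-v ^ 2 / 2)

noncomputable def stdNormalCdf (a : ℝ) : ℝ :=
  ∫ v in Set.Iic a, stdNormalPdf v

/-!
Writing `Z = m + σX` with `X` standard normal and `u = (zmin - m)/σ`, the improvement is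
`I = σ (u - X)⁺`, so it suffices to show `E[((u - X)⁺)²] = u E[(u - X)⁺] + Φ(u)`. On `{X ≤ u}`,
`((u - X)⁺)² - u (u - X)⁺ = X (X - u)`, and Gaussian integration by parts (`φ' = -x φ`, applied to
`(u - x) φ(x)`) gives `∫_{x ≤ u} x (x - u) φ(x) dx = Φ(u)`.
-/

open Filter Set Topology
open scoped NNReal ENNReal

lemma stdNormalPdf_eq_gaussianPDFReal : stdNormalPdf = gaussianPDFReal 0 1 := by
  ext x
  simp [stdNormalPdf, gaussianPDFReal]

lemma hasDerivAt_stdNormalPdf (x : ℝ) : HasDerivAt stdNormalPdf (-x * stdNormalPdf x) x := by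
  have h := (((hasDerivAt_pow 2 x).fun_neg.div_const 2).exp).const_mul (√(2 * π))⁻¹
  unfold stdNormalPdf
  exact h.congr_deriv (by push_cast; ring)

lemma integral_gaussianReal_zero_one_eq_integral_mul_stdNormalPdf (f : ℝ → ℝ) :
    ∫ x, f x ∂gaussianReal 0 1 = ∫ x, f x * stdNormalPdf x := by
  simp [integral_gaussianReal_eq_integral_smul one_ne_zero, stdNormalPdf_eq_gaussianPDFReal,
    mul_comm]

lemma MeasureTheory.Integrable.mul_stdNormalPdf {f : ℝ → ℝ}
    (hf : Integrable f (gaussianReal 0 1)) : Integrable (fun x => f x * stdNormalPdf x) := by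
  rw [gaussianReal_of_var_ne_zero 0 one_ne_zero, integrable_withDensity_iff_integrable_smul'
    (measurable_gaussianPDF 0 1) (ae_of_all _ fun _ => gaussianPDF_lt_top)] at hf
  simpa [stdNormalPdf_eq_gaussianPDFReal, toReal_gaussianPDF, mul_comm] using hf

lemma memLp_max_const_sub_gaussianReal (μ : ℝ) (v : ℝ≥0) (u : ℝ) {p : ℝ≥0∞} (hp : p ≠ ∞) :
    MemLp (fun x => max (u - x) 0) p (gaussianReal μ v) :=
  ((memLp_const u).sub (memLp_id_gaussianReal' p hp)).sup (memLp_const 0)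

lemma integrable_mul_sub_gaussianReal (μ : ℝ) (v : ℝ≥0) (u : ℝ) :
    Integrable (fun x => x * (x - u)) (gaussianReal μ v) :=
  (memLp_id_gaussianReal' 2 (by simp)).integrable_mul
    ((memLp_id_gaussianReal' 2 (by simp)).sub (memLp_const u))

lemma gaussianReal_eq_map_affine (m σ : ℝ) :
    gaussianReal m (σ ^ 2).toNNReal = (gaussianReal 0 1).map (fun x => σ * x + m) := by
  have hmul := gaussianReal_map_const_mul (μ := 0) (v := 1) σ
  rw [show (fun x => σ * x + m) = (· + m) ∘ (σ * ·) from rfl,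
    ← Measure.map_map (by fun_prop) (by fun_prop), hmul, gaussianReal_map_add_const]
  congr 1
  · ring
  · ext; simp [sq_nonneg]

lemma integral_Iic_mul_sub_mul_stdNormalPdf (u : ℝ) :
    ∫ x in Iic u, x * (x - u) * stdNormalPdf x = stdNormalCdf u := by
  set F : ℝ → ℝ := fun x => (u - x) * stdNormalPdf x
  have hF : ∀ x, HasDerivAt F (x * (x - u) * stdNormalPdf x - stdNormalPdf x) x := fun x =>
    (((hasDerivAt_id x).const_sub u).mul (hasDerivAt_stdNormalPdf x)).congr_deriv (by simp; ring)
  have hφ : Integrable stdNormalPdf :=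
    stdNormalPdf_eq_gaussianPDFReal ▸ integrable_gaussianPDFReal 0 1
  have hF' : Integrable fun x => x * (x - u) * stdNormalPdf x - stdNormalPdf x :=
    (integrable_mul_sub_gaussianReal 0 1 u).mul_stdNormalPdf.sub hφ
  have hF_int : Integrable F :=
    (((memLp_const u).sub (memLp_id_gaussianReal 1)).integrable le_rfl).mul_stdNormalPdf
  have hF_lim : Tendsto F atBot (𝓝 0) :=
    tendsto_zero_of_hasDerivAt_of_integrableOn_Iic (a := u) (fun x _ => hF x)
      hF'.integrableOn hF_int.integrableOn
  have hFTC :=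
    integral_Iic_of_hasDerivAt_of_tendsto' (a := u) (fun x _ => hF x) hF'.integrableOn hF_lim
  rw [integral_sub (integrable_mul_sub_gaussianReal 0 1 u).mul_stdNormalPdf.integrableOn
    hφ.integrableOn] at hFTC
  simp only [F, sub_self, zero_mul] at hFTC
  rw [stdNormalCdf]; linarith

lemma integral_sq_max_sub_gaussianReal_zero_one (u : ℝ) :
    ∫ x, max (u - x) 0 ^ 2 ∂gaussianReal 0 1
      = u * ∫ x, max (u - x) 0 ∂gaussianReal 0 1 + stdNormalCdf u := by
  have hI := (memLp_max_const_sub_gaussianReal 0 1 u (p := 1) (by simp)).integrable le_rfl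
  have hI2 := (memLp_max_const_sub_gaussianReal 0 1 u (p := 2) (by simp)).integrable_sq
  have hpoint : ∀ x, (max (u - x) 0 ^ 2 - u * max (u - x) 0) * stdNormalPdf x
      = (Iic u).indicator (fun x => x * (x - u) * stdNormalPdf x) x := by
    intro x
    rcases le_or_gt x u with hx | hx
    · rw [indicator_of_mem (mem_Iic.2 hx), max_eq_left (by linarith)]; ring
    · rw [indicator_of_notMem (notMem_Iic.2 hx), max_eq_right (by linarith)]; ring
  rw [← integral_const_mul, ← sub_eq_iff_eq_add', ← integral_sub hI2 (hI.const_mul u),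
    integral_gaussianReal_zero_one_eq_integral_mul_stdNormalPdf]
  simp_rw [hpoint]
  rw [integral_indicator measurableSet_Iic, integral_Iic_mul_sub_mul_stdNormalPdf]

lemma variance_max_sub_gaussianReal_zero_one (u : ℝ) :
    Var[fun x => max (u - x) 0; gaussianReal 0 1]
      = (∫ x, max (u - x) 0 ∂gaussianReal 0 1) * (u - ∫ x, max (u - x) 0 ∂gaussianReal 0 1)
        + stdNormalCdf u := by
  rw [variance_eq_sub (memLp_max_const_sub_gaussianReal 0 1 u (by simp))]
  simp only [Pi.pow_apply]
  rw [integral_sq_max_sub_gaussianReal_zero_one]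
  ring

theorem stmt_3 (m σ zmin : ℝ) (hσ : 0 < σ)
    (EI : ℝ)
    (hEI : EI = ∫ z, max (zmin - z) 0 ∂(gaussianReal m (Real.toNNReal (σ ^ 2)))) :
    variance (fun z => max (zmin - z) 0) (gaussianReal m (Real.toNNReal (σ ^ 2)))
      = EI * (zmin - m - EI) + σ ^ 2 * stdNormalCdf ((zmin - m) / σ) := by
  set u := (zmin - m) / σ
  have hzmin : zmin - m = σ * u := (mul_div_cancel₀ _ hσ.ne').symm
  have hcomp :
      (fun z => max (zmin - z) 0) ∘ (fun x => σ * x + m) = fun x => σ * max (u - x) 0 := by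
    ext x
    rw [Function.comp_apply, mul_max_of_nonneg _ _ hσ.le, mul_zero, mul_sub, ← hzmin]
    congr 1
    ring
  have hEI_std : EI = σ * ∫ x, max (u - x) 0 ∂gaussianReal 0 1 := by
    rw [hEI, gaussianReal_eq_map_affine, integral_map (by fun_prop) (by fun_prop),
      ← integral_const_mul]
    exact congrArg (integral _) hcomp
  rw [gaussianReal_eq_map_affine, variance_map (by fun_prop) (by fun_prop), hcomp,
    variance_const_mul, variance_max_sub_gaussianReal_zero_one, hEI_std, hzmin]
  ring
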